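/- Suppose a graphic nonincreasing degree sequence d_1 ≥ d_2 ≥ ... ≥ d_n satisfies d_k - d_{k+1} ≥ k - 1 for some integer k with 1 ≤ k < n. Then the graph realized by the Havel–Hakimi algorithm contains a clique on at least k vertices. -/

import Mathlib

/-- Sort a list of (vertex, remaining degree) pairs in nonincreasing order of
remaining degree (stable, so ties keep their original order). -/
def sortByRemDegDesc (l : List (ℕ × ℕ)) : List (ℕ × ℕ) :=
  l.mergeSort (fun a b => decide (b.2 ≤ a.2))

/-- The edges produced by the Havel–Hakimi algorithm: in each round, the vertex
with the largest remaining degree `dv` is connected to the `dv` vertices with the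
next-largest remaining degrees, whose remaining degrees are decremented. -/
def hhEdges : ℕ → List (ℕ × ℕ) → List (ℕ × ℕ)
  | 0, _ => []
  | fuel + 1, l =>
    match sortByRemDegDesc l with
    | [] => []
    | (v, dv) :: rest =>
        ((rest.take dv).map fun p => (v, p.1)) ++
          hhEdges fuel (((rest.take dv).map fun p => (p.1, p.2 - 1)) ++ rest.drop dv)

/-- The graph on vertex set `ℕ` (vertices `0, …, d.length - 1`) realized by the
Havel–Hakimi algorithm from the degree sequence `d`. -/
def hhGraph (d : List ℕ) : SimpleGraph ℕ :=
  SimpleGraph.fromRel fun a b => (a, b) ∈ hhEdges d.length (d.zipIdx.map Prod.swap)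

/-- A list of nonnegative integers is graphic if it is the degree sequence of a
simple graph. -/
def IsGraphicList (d : List ℕ) : Prop :=
  ∃ (G : SimpleGraph (Fin d.length)) (_ : DecidableRel G.Adj),
    ∀ i : Fin d.length, G.degree i = d.get i

/-!
The clique consists of the first `k` vertices. Call a block `U` of (vertex, remaining degree)
pairs gapped at `B` if each remaining degree in `U` is at least `B + (|U| - 1)` while every other
remaining degree is at most `B`. When `|U| ≥ 2`, sorting puts `U` first, so the pivot of the
round lies in `U` and, having remaining degree at least `|U| - 1`, is joined to the rest of `U`.
Those vertices lose one unit of remaining degree each, so they form a block of size `|U| - 1`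
that is again gapped at `B`, and induction over the rounds shows that the labels of `U` span a
clique. For a sorted sequence with `d_k - d_{k+1} ≥ k - 1`, the first `k` vertices are gapped at
`d_{k+1}`.
-/

theorem List.takeWhile_eq_filter_of_pairwise {α : Type*} {P : α → Bool} :
    ∀ {s : List α}, s.Pairwise (fun a b => P b → P a) → s.takeWhile P = s.filter P
  | [], _ => rfl
  | x :: xs, h => by
    rw [List.pairwise_cons] at h
    by_cases hx : P x
    · simp [hx, takeWhile_eq_filter_of_pairwise h.2]
    · have hxs : xs.filter P = [] := List.filter_eq_nil_iff.2 fun y hy hPy => hx (h.1 y hy hPy)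
      simp [hx, hxs]

theorem List.Perm.take_perm_of_pairwise {α : Type*} {P : α → Bool} {s U R : List α}
    (h : s.Perm (U ++ R)) (hs : s.Pairwise fun a b => P b → P a)
    (hU : ∀ x ∈ U, P x) (hR : ∀ x ∈ R, ¬ P x) :
    (s.take U.length).Perm U ∧ (s.drop U.length).Perm R := by
  have htakeWhile : (s.takeWhile P).Perm U := by
    rw [List.takeWhile_eq_filter_of_pairwise hs]
    simpa [List.filter_append, List.filter_eq_self.2 hU, List.filter_eq_nil_iff.2 hR]
      using h.filter P
  have htake : s.take U.length = s.takeWhile P := by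
    conv_lhs => rw [← List.takeWhile_append_dropWhile (p := P) (l := s)]
    exact List.take_left' htakeWhile.length_eq
  rw [htake]
  refine ⟨htakeWhile, (List.perm_append_left_iff U).1 ?_⟩
  have hsplit : s.takeWhile P ++ s.drop U.length = s := by
    rw [← htake, List.take_append_drop]
  exact (htakeWhile.symm.append_right _).trans (by rw [hsplit]; exact h)

theorem sortByRemDegDesc_perm (l : List (ℕ × ℕ)) : (sortByRemDegDesc l).Perm l :=
  List.mergeSort_perm l _

theorem sortByRemDegDesc_pairwise (l : List (ℕ × ℕ)) :
    (sortByRemDegDesc l).Pairwise fun a b => b.2 ≤ a.2 := by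
  have := List.pairwise_mergeSort (le := fun a b : ℕ × ℕ => decide (b.2 ≤ a.2))
    (fun a b c hab hbc => by simp only [decide_eq_true_eq] at *; omega)
    (fun a b => by simpa using Nat.le_total b.2 a.2) l
  exact this.imp (by simp)

theorem hhEdges_succ_of_sort_eq_cons {fuel v dv : ℕ} {l t : List (ℕ × ℕ)}
    (hs : sortByRemDegDesc l = (v, dv) :: t) :
    hhEdges (fuel + 1) l = (t.take dv).map (fun p => (v, p.1)) ++
      hhEdges fuel ((t.take dv).map (fun p => (p.1, p.2 - 1)) ++ t.drop dv) := by
  rw [hhEdges, hs]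

def hhEdgeGraph (fuel : ℕ) (l : List (ℕ × ℕ)) : SimpleGraph ℕ :=
  SimpleGraph.fromRel fun a b => (a, b) ∈ hhEdges fuel l

theorem hhEdgeGraph_le_succ {fuel v dv : ℕ} {l t : List (ℕ × ℕ)}
    (hs : sortByRemDegDesc l = (v, dv) :: t) :
    hhEdgeGraph fuel ((t.take dv).map (fun p => (p.1, p.2 - 1)) ++ t.drop dv) ≤
      hhEdgeGraph (fuel + 1) l := by
  intro a b
  simp only [hhEdgeGraph, SimpleGraph.fromRel_adj, hhEdges_succ_of_sort_eq_cons hs,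
    List.mem_append]
  tauto

theorem hhEdgeGraph_adj_of_sort_eq_cons {fuel v dv c : ℕ} {l t : List (ℕ × ℕ)}
    (hs : sortByRemDegDesc l = (v, dv) :: t) (hc : c ∈ (t.take dv).map Prod.fst) (hvc : v ≠ c) :
    (hhEdgeGraph (fuel + 1) l).Adj v c := by
  obtain ⟨q, hq, rfl⟩ := List.mem_map.1 hc
  rw [hhEdgeGraph, SimpleGraph.fromRel_adj, hhEdges_succ_of_sort_eq_cons hs]
  exact ⟨hvc, .inl (List.mem_append_left _ (List.mem_map_of_mem hq))⟩

def HasDegreeGap (B : ℕ) (l U : List (ℕ × ℕ)) : Prop :=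
  ∃ R, l.Perm (U ++ R) ∧ (∀ x ∈ U, B + (U.length - 1) ≤ x.2) ∧ ∀ x ∈ R, x.2 ≤ B

theorem HasDegreeGap.sort_eq_cons {B m v dv : ℕ} {l U t : List (ℕ × ℕ)}
    (h : HasDegreeGap B l U) (hU : U.length = m + 2) (hs : sortByRemDegDesc l = (v, dv) :: t) :
    ((v, dv) :: t.take (m + 1)).Perm U ∧ (∀ x ∈ U, B + (m + 1) ≤ x.2) ∧
      ∀ x ∈ t.drop (m + 1), x.2 ≤ B := by
  obtain ⟨R, hperm, hhigh, hlow⟩ := h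
  have hsplit := ((sortByRemDegDesc_perm l).trans hperm).take_perm_of_pairwise
    (P := fun x => B < x.2)
    ((sortByRemDegDesc_pairwise l).imp fun hab hb => by
      simp only [decide_eq_true_eq] at *; omega)
    (fun x hx => by have := hhigh x hx; simp only [decide_eq_true_eq]; omega)
    (by simpa using hlow)
  rw [hs, hU] at hsplit
  exact ⟨hsplit.1, fun x hx => by simpa [hU] using hhigh x hx,
    fun x hx => hlow x (hsplit.2.subset hx)⟩

theorem hasDegreeGap_decrement {B m dv : ℕ} {t : List (ℕ × ℕ)} (hdv : m + 1 ≤ dv)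
    (hhigh : ∀ x ∈ t.take (m + 1), B + (m + 1) ≤ x.2)
    (hlow : ∀ x ∈ t.drop (m + 1), x.2 ≤ B) :
    HasDegreeGap B ((t.take dv).map (fun p => (p.1, p.2 - 1)) ++ t.drop dv)
      ((t.take (m + 1)).map fun p => (p.1, p.2 - 1)) := by
  refine ⟨((t.drop (m + 1)).take (dv - (m + 1))).map (fun p => (p.1, p.2 - 1)) ++ t.drop dv,
    ?_, ?_, ?_⟩
  · rw [← List.append_assoc, ← List.map_append, ← List.take_add, Nat.add_sub_cancel' hdv]
  · simp only [List.length_map, List.length_take, List.mem_map, Prod.exists]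
    rintro _ ⟨x, y, hxy, rfl⟩
    have := hhigh _ hxy
    simp only at this ⊢
    omega
  · simp only [List.mem_append, List.mem_map]
    rintro _ (⟨x, hx, rfl⟩ | hx)
    · exact (Nat.sub_le _ _).trans (hlow x (List.take_subset _ _ hx))
    · exact hlow _ (List.drop_subset_drop_left _ hdv hx)

theorem SimpleGraph.isClique_coe_toFinset_of_length_le_one {α : Type*} [DecidableEq α]
    (G : SimpleGraph α) {L : List α} (hL : L.length ≤ 1) : G.IsClique ↑L.toFinset :=
  .of_subsingleton fun _ ha _ hb =>
    Finset.card_le_one.1 ((List.toFinset_card_le L).trans hL) _ ha _ hb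

theorem HasDegreeGap.length_le {B : ℕ} {l U : List (ℕ × ℕ)} (h : HasDegreeGap B l U) :
    U.length ≤ l.length := by
  obtain ⟨R, hperm, -⟩ := h
  simp [hperm.length_eq]

theorem isClique_hhEdgeGraph {B fuel : ℕ} {l U : List (ℕ × ℕ)} (h : HasDegreeGap B l U)
    (hfuel : U.length ≤ fuel + 1) :
    (hhEdgeGraph fuel l).IsClique ↑(U.map Prod.fst).toFinset := by
  induction fuel generalizing l U with
  | zero => exact SimpleGraph.isClique_coe_toFinset_of_length_le_one _ (by simpa using hfuel)
  | succ f ih =>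
    obtain hU | ⟨m, hU⟩ : U.length ≤ 1 ∨ ∃ m, U.length = m + 2 :=
      (le_or_gt U.length 1).imp_right fun _ => ⟨U.length - 2, by omega⟩
    · exact SimpleGraph.isClique_coe_toFinset_of_length_le_one _ (by simpa using hU)
    obtain ⟨⟨v, dv⟩, t, hs⟩ : ∃ p t, sortByRemDegDesc l = p :: t := by
      refine List.exists_cons_of_ne_nil fun hl => ?_
      have := (sortByRemDegDesc_perm l).length_eq
      have := h.length_le
      simp only [hl, List.length_nil] at *
      omega
    obtain ⟨hperm, hhigh, hlow⟩ := h.sort_eq_cons hU hs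
    have hdv : m + 1 ≤ dv := by
      have hv : B + (m + 1) ≤ dv := hhigh _ (hperm.subset List.mem_cons_self)
      omega
    have hlabels : (↑(U.map Prod.fst).toFinset : Set ℕ) =
        insert v ↑((t.take (m + 1)).map Prod.fst).toFinset := by
      rw [List.toFinset_eq_of_perm _ _ (hperm.symm.map Prod.fst)]
      simp
    rw [hlabels, SimpleGraph.isClique_insert]
    refine ⟨?_, fun c hc hvc => hhEdgeGraph_adj_of_sort_eq_cons hs ?_ hvc⟩
    · have hnext := ih (hasDegreeGap_decrement hdv
        (fun x hx => hhigh x (hperm.subset (List.mem_cons_of_mem _ hx))) hlow)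
        (by simp only [List.length_map, List.length_take]; omega)
      simpa [List.map_map, Function.comp_def] using hnext.mono (hhEdgeGraph_le_succ hs)
    · simp only [Finset.mem_coe, List.mem_toFinset] at hc
      exact ((List.take_prefix_take_left hdv).map Prod.fst).subset hc

theorem hasDegreeGap_zipIdx {d : List ℕ} (hsorted : d.Pairwise (· ≥ ·)) {k : ℕ}
    (hk : k < d.length)
    (hgap : d[k] + (k - 1) ≤ d[k - 1]'((k.sub_le 1).trans_lt hk)) :
    HasDegreeGap d[k] (d.zipIdx.map Prod.swap) ((d.zipIdx.map Prod.swap).take k) := by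
  refine ⟨(d.zipIdx.map Prod.swap).drop k, by rw [List.take_append_drop], ?_, ?_⟩
  · intro x hx
    obtain ⟨i, hi, rfl⟩ := List.mem_iff_getElem.1 hx
    simp only [List.length_take, List.length_map, List.length_zipIdx, lt_inf_iff, List.getElem_take,
      List.getElem_map, List.getElem_zipIdx, zero_add, Prod.swap_prod_mk] at hi ⊢
    have : d[k - 1] ≤ d[i] := hsorted.sortedGE.getElem_ge_getElem_of_le (by omega)
    omega
  · intro x hx
    obtain ⟨i, hi, rfl⟩ := List.mem_iff_getElem.1 hx
    simp only [List.length_drop, List.length_map, List.length_zipIdx, List.getElem_drop,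
      List.getElem_map, List.getElem_zipIdx, zero_add, Prod.swap_prod_mk] at hi ⊢
    exact hsorted.sortedGE.getElem_ge_getElem_of_le (by omega)

-- `d.get ⟨k - 1, _⟩` is the paper's `d_k`: lists are 0-indexed.
/-- If a graphic nonincreasing sequence `d₁ ≥ … ≥ d_n` satisfies
`d_k - d_{k+1} ≥ k - 1` (1-indexed; here 0-indexed as `d.get (k-1) - d.get k`),
then the Havel–Hakimi realization contains a clique on at least `k` vertices. -/
theorem hhGraph_has_clique (d : List ℕ) (hsorted : d.Pairwise (· ≥ ·))
    (k : ℕ) (hk2 : k < d.length)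
    (hgap : d.get ⟨k - 1, by omega⟩ - d.get ⟨k, hk2⟩ ≥ k - 1) :
    ∃ s : Finset ℕ, k ≤ s.card ∧ (hhGraph d).IsClique ↑s := by
  have hle : d[k] ≤ d[k - 1] := hsorted.sortedGE.getElem_ge_getElem_of_le (by omega)
  have hgap' : d[k] + (k - 1) ≤ d[k - 1] := by simp only [List.get_eq_getElem] at hgap; omega
  have hclique := isClique_hhEdgeGraph (fuel := d.length)
    (hasDegreeGap_zipIdx hsorted hk2 hgap') (by simp)
  have hlabels : (((d.zipIdx.map Prod.swap).take k).map Prod.fst).toFinset = Finset.range k := by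
    have hk : min k d.length = k := by omega
    rw [List.map_take, List.map_map, show Prod.fst ∘ Prod.swap = @Prod.snd ℕ ℕ from rfl,
      List.zipIdx_map_snd, ← List.range_eq_range', List.take_range, hk, List.toFinset_range]
  exact ⟨Finset.range k, by simp, by rwa [hlabels] at hclique⟩
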